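/- (Theorem 3, mathematical content) Let f : 𝔽₂ⁿ → {1,-1}, let S ⊆ 𝔽₂ⁿ, let g : 𝔽₂ⁿ → {1,-1} be defined by g(x) = -1 if x ∈ S and g(x) = 1 otherwise, and set p = 2^{-2n} Σ_{x∈S} W_f(x)². Then 1 - (Φ_{f,g,f})² = 4p - 4p². -/

import Mathlib

open Finset

/-- The sign character `(-1)^(x·y)` where `x·y = Σᵢ xᵢyᵢ` in `𝔽₂`. -/
noncomputable def chi {n : ℕ} (x y : Fin n → ZMod 2) : ℝ :=
  (-1 : ℝ) ^ (∑ i, x i * y i).val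

/-- A function takes values in `{1, -1}`. -/
noncomputable def IsPM {n : ℕ} (f : (Fin n → ZMod 2) → ℝ) : Prop :=
  ∀ x, f x = 1 ∨ f x = -1

/-- The Walsh transform `W_f(ω) = Σ_x f(x)·(-1)^(x·ω)`. -/
noncomputable def walsh {n : ℕ} (f : (Fin n → ZMod 2) → ℝ) (ω : Fin n → ZMod 2) : ℝ :=
  ∑ x, f x * chi x ω

/-- The 2-fold Forrelation `Φ_{f,g} = 2^{-3n/2} Σ_x f(x) W_g(x)`. -/
noncomputable def forr2 {n : ℕ} (f g : (Fin n → ZMod 2) → ℝ) : ℝ :=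
  (2 : ℝ) ^ (-(3 * (n : ℝ)) / 2) * ∑ x, f x * walsh g x

/-- The 3-fold Forrelation. -/
noncomputable def forr3 {n : ℕ} (f₁ f₂ f₃ : (Fin n → ZMod 2) → ℝ) : ℝ :=
  (1 / (2 : ℝ) ^ (2 * n)) *
    ∑ x₁, ∑ x₂, ∑ x₃, f₁ x₁ * chi x₁ x₂ * f₂ x₂ * chi x₂ x₃ * f₃ x₃

/-- The cross-correlation `C_{f,g}(y) = Σ_x f(x)·g(x ⊕ y)`. -/
noncomputable def crossCorr {n : ℕ} (f g : (Fin n → ZMod 2) → ℝ) (y : Fin n → ZMod 2) : ℝ :=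
  ∑ x, f x * g (x + y)

lemma neg_one_pow_val_add (a b : ZMod 2) :
    (-1 : ℝ) ^ ((a + b).val) = (-1 : ℝ) ^ a.val * (-1 : ℝ) ^ b.val := by
  have ha : a = 0 ∨ a = 1 := by revert a; decide
  have hb : b = 0 ∨ b = 1 := by revert b; decide
  rcases ha with h | h <;> rcases hb with h' | h' <;> subst h <;> subst h' <;>
    norm_num [show ZMod.val ((1:ZMod 2)+1) = 0 from rfl, show ZMod.val (2 : ZMod 2) = 0 from rfl, ZMod.val_zero, ZMod.val_one]

lemma chi_comm {n : ℕ} (x y : Fin n → ZMod 2) : chi x y = chi y x := by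
  unfold chi
  congr 2
  exact Finset.sum_congr rfl fun i _ => mul_comm _ _

lemma chi_add_right {n : ℕ} (x y z : Fin n → ZMod 2) :
    chi x (y + z) = chi x y * chi x z := by
  unfold chi
  have h : (∑ i, x i * (y + z) i) = (∑ i, x i * y i) + (∑ i, x i * z i) := by
    rw [← Finset.sum_add_distrib]
    exact Finset.sum_congr rfl fun i _ => by simp [mul_add]
  rw [h, neg_one_pow_val_add]

lemma chi_mul {n : ℕ} (x y ω : Fin n → ZMod 2) :
    chi x ω * chi y ω = chi (x + y) ω := by
  rw [chi_comm x ω, chi_comm y ω, chi_comm (x+y) ω, chi_add_right]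

lemma sum_chi {n : ℕ} (z : Fin n → ZMod 2) :
    ∑ ω : Fin n → ZMod 2, chi z ω = if z = 0 then (2 : ℝ) ^ n else 0 := by
  by_cases hz : z = 0
  · subst hz
    simp [chi, ZMod.val_zero, Finset.card_univ]
  · rw [if_neg hz]
    obtain ⟨i, hi⟩ : ∃ i, z i ≠ 0 := by
      by_contra h
      push_neg at h
      exact hz (funext h)
    have hz1 : z i = 1 := by
      have h2 : ∀ a : ZMod 2, a ≠ 0 → a = 1 := by decide
      exact h2 _ hi
    set ω₀ : Fin n → ZMod 2 := Pi.single i 1 with hω₀def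
    have hω₀ : chi z ω₀ = -1 := by
      unfold chi
      have : (∑ j, z j * ω₀ j) = z i := by
        rw [Finset.sum_eq_single i]
        · simp [hω₀def]
        · intro j _ hj; simp [hω₀def, Pi.single_eq_of_ne hj]
        · intro h; exact absurd (Finset.mem_univ i) h
      rw [this, hz1, ZMod.val_one]
      norm_num
    have key : ∑ ω : Fin n → ZMod 2, chi z ω = ∑ ω : Fin n → ZMod 2, chi z (ω + ω₀) :=
      (Fintype.sum_equiv (Equiv.addRight ω₀) _ _ (fun ω => rfl)).symm
    have : ∑ ω : Fin n → ZMod 2, chi z ω = -∑ ω : Fin n → ZMod 2, chi z ω := by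
      nth_rewrite 1 [key]
      rw [← Finset.sum_neg_distrib]
      exact Finset.sum_congr rfl fun ω _ => by rw [chi_add_right, hω₀]; ring
    linarith


lemma add_eq_zero_iff_eq {n : ℕ} (x y : Fin n → ZMod 2) : x + y = 0 ↔ x = y := by
  constructor
  · intro h
    funext i
    have := congrFun h i
    have h2 : ∀ a b : ZMod 2, a + b = 0 → a = b := by decide
    exact h2 _ _ this
  · rintro rfl
    funext i
    have h2 : ∀ a : ZMod 2, a + a = 0 := by decide
    exact h2 _

lemma parseval {n : ℕ} (f : (Fin n → ZMod 2) → ℝ) (hf : IsPM f) :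
    ∑ ω : Fin n → ZMod 2, (walsh f ω) ^ 2 = (2 : ℝ) ^ (2 * n) := by
  have hsq : ∀ x, f x * f x = 1 := fun x => by rcases hf x with h | h <;> rw [h] <;> norm_num
  have step : ∀ ω : Fin n → ZMod 2,
      (walsh f ω) ^ 2 = ∑ x, ∑ y, f x * f y * chi (x + y) ω := by
    intro ω
    rw [sq, walsh, Finset.sum_mul_sum]
    refine Finset.sum_congr rfl fun x _ => Finset.sum_congr rfl fun y _ => ?_
    rw [← chi_mul]; ring
  calc ∑ ω : Fin n → ZMod 2, (walsh f ω) ^ 2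
      = ∑ ω : Fin n → ZMod 2, ∑ x, ∑ y, f x * f y * chi (x + y) ω := by
        exact Finset.sum_congr rfl fun ω _ => step ω
    _ = ∑ x, ∑ y, ∑ ω : Fin n → ZMod 2, f x * f y * chi (x + y) ω := by
        rw [Finset.sum_comm]
        exact Finset.sum_congr rfl fun x _ => Finset.sum_comm
    _ = ∑ x, ∑ y, f x * f y * (if x = y then (2 : ℝ) ^ n else 0) := by
        refine Finset.sum_congr rfl fun x _ => Finset.sum_congr rfl fun y _ => ?_
        rw [← Finset.mul_sum, sum_chi]
        simp only [add_eq_zero_iff_eq]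
    _ = ∑ x : Fin n → ZMod 2, (2 : ℝ) ^ n := by
        refine Finset.sum_congr rfl fun x _ => ?_
        rw [Finset.sum_eq_single x]
        · simp [hsq x]
        · intro y _ hy; simp [Ne.symm hy]
        · intro h; exact absurd (Finset.mem_univ x) h
    _ = (2 : ℝ) ^ (2 * n) := by
        rw [Finset.sum_const, Finset.card_univ]
        simp [two_mul, pow_add]

lemma forr3_eq {n : ℕ} (f g : (Fin n → ZMod 2) → ℝ) :
    forr3 f g f = (1 / (2 : ℝ) ^ (2 * n)) * ∑ x, g x * (walsh f x) ^ 2 := by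
  unfold forr3
  congr 1
  rw [Finset.sum_comm]
  refine Finset.sum_congr rfl fun x₂ _ => ?_
  rw [sq, walsh]
  simp only [Finset.mul_sum, Finset.sum_mul]
  refine Finset.sum_congr rfl fun x₁ _ => ?_
  refine Finset.sum_congr rfl fun x₃ _ => ?_
  rw [chi_comm x₂ x₃]
  ring

theorem forr3_sampling_probability {n : ℕ} (f g : (Fin n → ZMod 2) → ℝ)
    (S : Finset (Fin n → ZMod 2)) (hf : IsPM f)
    (hg : ∀ x, g x = if x ∈ S then -1 else 1) (p : ℝ)
    (hp : p = (1 / (2 : ℝ) ^ (2 * n)) * ∑ x ∈ S, (walsh f x) ^ 2) :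
    1 - (forr3 f g f) ^ 2 = 4 * p - 4 * p ^ 2 := by
  have h2n : (2 : ℝ) ^ (2 * n) ≠ 0 := by positivity
  have hS : ∑ x ∈ S, (walsh f x) ^ 2 = (2 : ℝ) ^ (2 * n) * p := by
    rw [hp]; field_simp
  have hsum : ∑ x : Fin n → ZMod 2, g x * (walsh f x) ^ 2
      = (2 : ℝ) ^ (2 * n) - 2 * ((2 : ℝ) ^ (2 * n) * p) := by
    have : ∀ x, g x * (walsh f x) ^ 2
        = (walsh f x) ^ 2 - 2 * (if x ∈ S then (walsh f x) ^ 2 else 0) := by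
      intro x; rw [hg x]; split_ifs <;> ring
    rw [Finset.sum_congr rfl fun x _ => this x, Finset.sum_sub_distrib,
      parseval f hf, ← Finset.mul_sum, Finset.sum_ite_mem,
      Finset.univ_inter, hS]
  have hforr : forr3 f g f = 1 - 2 * p := by
    rw [forr3_eq, hsum]
    field_simp
  rw [hforr]; ring
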